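/- arXiv:2508.16957 — 2 statements merged into one kernel-verified Lean document; each statement's English description precedes it below -/
import Mathlib

section
/- Let ε > 0 and let g : [0,∞) → ℝ be continuous with g(t) ≥ 0 for all t. Suppose φ : [0,∞) → ℝ is differentiable with φ'(t) = −ε·g(t)·sin(φ(t)) and φ(0) ∈ (−π, π). Then φ(t) ∈ (−π, π) for all t ≥ 0, and the function t ↦ |φ(t)| is nonincreasing on [0,∞). -/
/-!
`cos ∘ φ` is a Lyapunov function: its derivative is `ε g sin² φ ≥ 0`, so `cos φ(t)` never drops
below `cos φ(0) > -1`. By continuity `|φ|` can then never reach `π`, and on `(-π, π)` we have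
`|φ| = arccos (cos φ)`, which is nonincreasing because `arccos` is antitone.
-/

open Real Set

lemma abs_eq_arccos_cos {x : ℝ} (hx : |x| ≤ π) : |x| = arccos (cos x) := by
  rw [← cos_abs, arccos_cos (abs_nonneg x) hx]

lemma neg_one_lt_cos_of_abs_lt_pi {x : ℝ} (hx : |x| < π) : -1 < cos x := by
  rw [← cos_pi, ← cos_abs x]
  exact cos_lt_cos_of_nonneg_of_le_pi (abs_nonneg _) le_rfl hx

lemma monotoneOn_cos_comp_of_hasDerivAt {s : Set ℝ} (hs : Convex ℝ s) {φ c : ℝ → ℝ}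
    (hφ : ∀ t ∈ s, HasDerivAt φ (-c t * sin (φ t)) t) (hc : ∀ t ∈ s, 0 ≤ c t) :
    MonotoneOn (cos ∘ φ) s := by
  have hderiv : ∀ t ∈ s, HasDerivAt (cos ∘ φ) (c t * sin (φ t) ^ 2) t := fun t ht =>
    (hφ t ht).cos.congr_deriv (by ring)
  refine monotoneOn_of_hasDerivWithinAt_nonneg hs
    (fun t ht => (hderiv t ht).continuousAt.continuousWithinAt)
    (fun t ht => (hderiv t (interior_subset ht)).hasDerivWithinAt) fun t ht => ?_
  have := hc t (interior_subset ht)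
  positivity

lemma abs_lt_pi_of_monotoneOn_cos_comp {φ : ℝ → ℝ} {a b : ℝ} (hab : a ≤ b)
    (hφ : ContinuousOn φ (Icc a b)) (hmono : MonotoneOn (cos ∘ φ) (Icc a b)) (ha : |φ a| < π) :
    |φ b| < π := by
  by_contra! hb
  obtain ⟨s, hs, hπ : |φ s| = π⟩ := intermediate_value_Icc hab hφ.abs ⟨ha.le, hb⟩
  have hcos : cos (φ a) ≤ cos (φ s) := hmono (left_mem_Icc.2 hab) hs hs.1
  rw [← cos_abs (φ s), hπ, cos_pi] at hcos
  linarith [neg_one_lt_cos_of_abs_lt_pi ha]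

lemma antitoneOn_abs_of_monotoneOn_cos_comp {φ : ℝ → ℝ} {s : Set ℝ}
    (hmono : MonotoneOn (cos ∘ φ) s) (hφ : ∀ t ∈ s, |φ t| ≤ π) :
    AntitoneOn (fun t => |φ t|) s := fun a ha b hb hab => by
  simp only [abs_eq_arccos_cos (hφ a ha), abs_eq_arccos_cos (hφ b hb)]
  exact antitone_arccos (hmono ha hb hab)

theorem phase_difference_invariance_and_decay_general
    (ε : ℝ) (hε : 0 < ε) (g : ℝ → ℝ)
    (hg : ∀ t, 0 ≤ t → 0 ≤ g t)
    (φ : ℝ → ℝ)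
    (hφ : ∀ t, 0 ≤ t → HasDerivAt φ (-ε * g t * Real.sin (φ t)) t)
    (h0 : φ 0 ∈ Set.Ioo (-π) π) :
    (∀ t, 0 ≤ t → φ t ∈ Set.Ioo (-π) π) ∧
      AntitoneOn (fun t => |φ t|) (Set.Ici (0 : ℝ)) := by
  have hmono : MonotoneOn (cos ∘ φ) (Ici 0) :=
    monotoneOn_cos_comp_of_hasDerivAt (c := fun t => ε * g t) (convex_Ici 0)
      (fun t ht => by simpa only [neg_mul] using hφ t ht) fun t ht => mul_nonneg hε.le (hg t ht)
  have hcont : ContinuousOn φ (Ici 0) := fun t ht => (hφ t ht).continuousAt.continuousWithinAt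
  have hbound : ∀ t, 0 ≤ t → |φ t| < π := fun t ht =>
    abs_lt_pi_of_monotoneOn_cos_comp ht (hcont.mono Icc_subset_Ici_self)
      (hmono.mono Icc_subset_Ici_self) (abs_lt.2 h0)
  exact ⟨fun t ht => abs_lt.1 (hbound t ht),
    antitoneOn_abs_of_monotoneOn_cos_comp hmono fun t ht => (hbound t ht).le⟩

/-- Forward invariance of `(−π, π)` and monotone decay of `|φ|` for the phase-difference
equation `φ' = −ε g(t) sin(φ)` with `g ≥ 0`. -/
theorem phase_difference_invariance_and_decay
    (ε : ℝ) (hε : 0 < ε) (g : ℝ → ℝ)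
    (hg_cont : ContinuousOn g (Set.Ici (0 : ℝ)))
    (hg : ∀ t, 0 ≤ t → 0 ≤ g t)
    (φ : ℝ → ℝ)
    (hφ : ∀ t, 0 ≤ t → HasDerivAt φ (-ε * g t * Real.sin (φ t)) t)
    (h0 : φ 0 ∈ Set.Ioo (-π) π) :
    (∀ t, 0 ≤ t → φ t ∈ Set.Ioo (-π) π) ∧
      AntitoneOn (fun t => |φ t|) (Set.Ici (0 : ℝ)) :=
  phase_difference_invariance_and_decay_general ε hε g hg φ hφ h0
end

section
/- Let α, β ∈ ℝ and ω = α − β. Let X = (x₁, x₂) : [0,∞) → ℝ² be a solution of the Stuart–Landau system ẋ₁ = x₁ − α x₂ − (x₁ − β x₂)(x₁² + x₂²), ẋ₂ = α x₁ + x₂ − (β x₁ + x₂)(x₁² + x₂²) with X(0) = x₀ ≠ (0,0). Define θ₀ = arg(x₀) − β·log‖x₀‖, where arg denotes the argument of x₀ viewed as a nonzero complex number x₁ + i x₂. Then ‖X(t) − (cos(ωt + θ₀), sin(ωt + θ₀))‖ → 0 as t → ∞. -/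
open Real

/-- The Stuart–Landau vector field (normal form of the supercritical Hopf bifurcation). -/
def slField (α β : ℝ) : ℝ × ℝ → ℝ × ℝ := fun p =>
  (p.1 - α * p.2 - (p.1 - β * p.2) * (p.1 ^ 2 + p.2 ^ 2),
   α * p.1 + p.2 - (β * p.1 + p.2) * (p.1 ^ 2 + p.2 ^ 2))

/-!
In complex form `z = x₁ + i x₂` the system reads `ż = (1 + iα - (1 + iβ)|z|²) z`. Hence
`u = |z|²` solves the logistic equation `u̇ = 2u(1 - u)`, so `u` never vanishes and `u → 1`.
Since `d/dt (iωt + (1 + iβ)/2 · log u) = 1 + iα - (1 + iβ)u`, the product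
`z · exp(-iωt - (1 + iβ)/2 · log u)` is conserved; its value at `t = 0` is `e^{iΘ(z₀)}`. Therefore
`z(t) = e^{i(ωt + Θ(z₀))} · exp((1 + iβ)/2 · log u(t))`, and the distance to the limit-cycle
trajectory is `|exp((1 + iβ)/2 · log u(t)) - 1| → 0`.
-/

open Filter Topology Set
open Complex (I)
open scoped Complex

section LinearODE

variable {E : Type*} [NormedAddCommGroup E] [NormedSpace ℝ E]

theorem eq_of_hasDerivAt_zero_of_nonneg {f : ℝ → E} (hf : ∀ t, 0 ≤ t → HasDerivAt f 0 t) :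
    ∀ t, 0 ≤ t → f t = f 0 := fun t ht =>
  constant_of_has_deriv_right_zero (fun s hs => (hf s hs.1).continuousAt.continuousWithinAt)
    (fun s hs => (hf s hs.1).hasDerivWithinAt) t ⟨ht, le_rfl⟩

theorem eq_zero_of_hasDerivAt_smul_self {f : ℝ → E} {a : ℝ → ℝ} (ha : ContinuousOn a (Ici 0))
    (hf : ∀ t, 0 ≤ t → HasDerivAt f (a t • f t) t) (hf0 : f 0 = 0) :
    ∀ t, 0 ≤ t → f t = 0 := by
  intro b hb
  obtain ⟨K, hK⟩ := isCompact_Icc.exists_bound_of_continuousOn (ha.mono Icc_subset_Ici_self)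
  have hbound : ∀ x ∈ Ico 0 b, ‖a x • f x‖ ≤ K * ‖f x‖ + 0 := fun x hx => by
    rw [norm_smul, add_zero]
    gcongr
    exact hK x ⟨hx.1, hx.2.le⟩
  have h := norm_le_gronwallBound_of_norm_deriv_right_le
    (fun s hs => (hf s hs.1).continuousAt.continuousWithinAt)
    (fun s hs => (hf s hs.1).hasDerivWithinAt) (norm_le_zero_iff.2 hf0) hbound b ⟨hb, le_rfl⟩
  rwa [gronwallBound_ε0_δ0, norm_le_zero_iff] at h

end LinearODE

theorem eq_mul_exp_of_hasDerivAt {z G g : ℝ → ℂ} (hz : ∀ t, 0 ≤ t → HasDerivAt z (g t * z t) t)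
    (hG : ∀ t, 0 ≤ t → HasDerivAt G (g t) t) :
    ∀ t, 0 ≤ t → z t = z 0 * cexp (G t - G 0) := by
  have hconst := eq_of_hasDerivAt_zero_of_nonneg (f := fun t => z t * cexp (-G t)) fun t ht =>
    ((hz t ht).mul (hG t ht).neg.cexp).congr_deriv (by simp only [Pi.neg_apply]; ring)
  intro t ht
  rw [sub_eq_add_neg, Complex.exp_add, mul_comm (cexp _), ← mul_assoc, ← hconst t ht, mul_assoc,
    ← Complex.exp_add, neg_add_cancel, Complex.exp_zero, mul_one]

section Logistic

variable {k : ℝ} {u : ℝ → ℝ}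

/-- The explicit solution `u = 1 / (1 - (1 - 1 / u 0) e^{-kt})` of the logistic equation, written
without division: this is also how one learns that `u` never vanishes. -/
theorem mul_logistic_denom_eq_one (hu0 : u 0 ≠ 0)
    (hu : ∀ t, 0 ≤ t → HasDerivAt u (k * u t * (1 - u t)) t) :
    ∀ t, 0 ≤ t → u t * (1 - (1 - (u 0)⁻¹) * exp (-(k * t))) = 1 := by
  set q := 1 - (u 0)⁻¹
  have hD := eq_zero_of_hasDerivAt_smul_self (a := fun t => -(k * u t))
    (f := fun t => u t * (1 - q * exp (-(k * t))) - 1)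
    (fun s hs => ((hu s hs).continuousAt.continuousWithinAt.const_mul k).neg)
    (fun t ht => by
      have he : HasDerivAt (fun t => exp (-(k * t))) (exp (-(k * t)) * -(k * 1)) t :=
        ((hasDerivAt_id t).const_mul k).neg.exp
      exact (((hu t ht).mul ((he.const_mul q).const_sub 1)).sub_const 1).congr_deriv
        (by rw [smul_eq_mul]; ring))
    (by simp [q, hu0])
  intro t ht
  simpa [sub_eq_zero] using hD t ht

theorem tendsto_of_logistic (hk : 0 < k) (hu0 : u 0 ≠ 0)
    (hu : ∀ t, 0 ≤ t → HasDerivAt u (k * u t * (1 - u t)) t) : Tendsto u atTop (𝓝 1) := by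
  have hexp : Tendsto (fun t => exp (-(k * t))) atTop (𝓝 0) :=
    tendsto_exp_atBot.comp (tendsto_neg_atTop_atBot.comp (tendsto_id.const_mul_atTop hk))
  have hlim := ((tendsto_const_nhds (x := (1 : ℝ))).sub
    ((tendsto_const_nhds (x := 1 - (u 0)⁻¹)).mul hexp)).inv₀ (by norm_num)
  simp only [mul_zero, sub_zero, inv_one] at hlim
  refine hlim.congr' ?_
  filter_upwards [eventually_ge_atTop 0] with t ht
  exact (eq_inv_of_mul_eq_one_left (mul_logistic_denom_eq_one hu0 hu t ht)).symm

end Logistic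

noncomputable def asymptoticPhase (β : ℝ) (w : ℂ) : ℝ := Complex.arg w - β * Real.log ‖w‖

theorem mul_exp_neg_log_norm_eq_exp_asymptoticPhase {w : ℂ} (hw : w ≠ 0) (β : ℝ) :
    w * cexp (-((1 + β * I) * Real.log ‖w‖)) = cexp (asymptoticPhase β w * I) := by
  have hr : ((‖w‖ : ℝ) : ℂ) = cexp (Real.log ‖w‖) := by
    rw [← Complex.ofReal_exp, Real.exp_log (norm_pos_iff.2 hw)]
  nth_rewrite 1 [← Complex.norm_mul_exp_arg_mul_I w]
  rw [hr, ← Complex.exp_add, ← Complex.exp_add, asymptoticPhase]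
  push_cast
  ring_nf

theorem fst_sq_add_snd_sq_ne_zero {p : ℝ × ℝ} (hp : p ≠ 0) : p.1 ^ 2 + p.2 ^ 2 ≠ 0 := by
  intro h
  obtain ⟨h₁, h₂⟩ := (add_eq_zero_iff_of_nonneg (sq_nonneg _) (sq_nonneg _)).1 h
  exact hp (Prod.ext (pow_eq_zero_iff two_ne_zero |>.1 h₁) (pow_eq_zero_iff two_ne_zero |>.1 h₂))

theorem norm_sub_cos_sin_le (p : ℝ × ℝ) (θ : ℝ) :
    ‖p - (Real.cos θ, Real.sin θ)‖ ≤ ‖(p.1 + p.2 * I : ℂ) - cexp (θ * I)‖ := by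
  convert Complex.equivRealProd_apply_le _
  ext <;> simp [Complex.exp_ofReal_mul_I_re, Complex.exp_ofReal_mul_I_im]

namespace StuartLandau

variable {α β : ℝ} {X : ℝ → ℝ × ℝ}

theorem slField_fst_add_snd_mul_I (α β : ℝ) (p : ℝ × ℝ) :
    ((slField α β p).1 + (slField α β p).2 * I : ℂ) =
      (1 + α * I - (1 + β * I) * ((p.1 ^ 2 + p.2 ^ 2 : ℝ) : ℂ)) * (p.1 + p.2 * I) := by
  simp only [slField]
  push_cast
  ring_nf
  rw [Complex.I_sq]
  ring

theorem hasDerivAt_fst_add_snd_mul_I {t : ℝ} (h : HasDerivAt X (slField α β (X t)) t) :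
    HasDerivAt (fun s => ((X s).1 + (X s).2 * I : ℂ))
      ((1 + α * I - (1 + β * I) * (((X t).1 ^ 2 + (X t).2 ^ 2 : ℝ) : ℂ)) *
        ((X t).1 + (X t).2 * I)) t := by
  rw [← slField_fst_add_snd_mul_I]
  simpa only [Function.comp_def, ContinuousLinearEquiv.coe_coe,
    Complex.equivRealProdCLM_symm_apply] using
    Complex.equivRealProdCLM.symm.hasFDerivAt.comp_hasDerivAt t h

theorem hasDerivAt_fst_sq_add_snd_sq {t : ℝ} (h : HasDerivAt X (slField α β (X t)) t) :
    HasDerivAt (fun s => (X s).1 ^ 2 + (X s).2 ^ 2)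
      (2 * ((X t).1 ^ 2 + (X t).2 ^ 2) * (1 - ((X t).1 ^ 2 + (X t).2 ^ 2))) t := by
  have h₁ := (ContinuousLinearMap.fst ℝ ℝ ℝ).hasFDerivAt.comp_hasDerivAt t h
  have h₂ := (ContinuousLinearMap.snd ℝ ℝ ℝ).hasFDerivAt.comp_hasDerivAt t h
  refine ((h₁.pow 2).add (h₂.pow 2)).congr_deriv ?_
  simp only [ContinuousLinearMap.coe_fst', ContinuousLinearMap.coe_snd', Function.comp_apply,
    slField]
  ring

theorem tendsto_fst_sq_add_snd_sq (hX : ∀ t, 0 ≤ t → HasDerivAt X (slField α β (X t)) t)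
    (hX0 : X 0 ≠ 0) : Tendsto (fun t => (X t).1 ^ 2 + (X t).2 ^ 2) atTop (𝓝 1) :=
  tendsto_of_logistic two_pos (fst_sq_add_snd_sq_ne_zero hX0) fun t ht =>
    hasDerivAt_fst_sq_add_snd_sq (hX t ht)

theorem fst_add_snd_mul_I_eq (hX : ∀ t, 0 ≤ t → HasDerivAt X (slField α β (X t)) t)
    (hX0 : X 0 ≠ 0) (t : ℝ) (ht : 0 ≤ t) :
    ((X t).1 + (X t).2 * I : ℂ) =
      cexp ((((α - β) * t + asymptoticPhase β ((X 0).1 + (X 0).2 * I)) : ℝ) * I) *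
        cexp ((1 + β * I) / 2 * Real.log ((X t).1 ^ 2 + (X t).2 ^ 2)) := by
  set u := fun s => (X s).1 ^ 2 + (X s).2 ^ 2
  have hu : ∀ t, 0 ≤ t → HasDerivAt u (2 * u t * (1 - u t)) t :=
    fun t ht => hasDerivAt_fst_sq_add_snd_sq (hX t ht)
  have hu0 : u 0 ≠ 0 := fst_sq_add_snd_sq_ne_zero hX0
  have hlog_u0 : Real.log (u 0) = 2 * Real.log ‖((X 0).1 + (X 0).2 * I : ℂ)‖ := by
    rw [show u 0 = (X 0).1 ^ 2 + (X 0).2 ^ 2 from rfl, ← Complex.normSq_add_mul_I,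
      Complex.normSq_eq_norm_sq, Real.log_pow]
    norm_num
  have hz0 : ((X 0).1 + (X 0).2 * I : ℂ) ≠ 0 := by
    rw [← norm_ne_zero_iff, ← pow_ne_zero_iff two_ne_zero, ← Complex.normSq_eq_norm_sq,
      Complex.normSq_add_mul_I]
    exact hu0
  have hG : ∀ t, 0 ≤ t →
      HasDerivAt (fun s => (((α - β) * s : ℝ) : ℂ) * I + (1 + β * I) / 2 * Real.log (u s))
        (1 + α * I - (1 + β * I) * ((u t : ℝ) : ℂ)) t := fun t ht => by
    have hut : u t ≠ 0 := left_ne_zero_of_mul_eq_one (mul_logistic_denom_eq_one hu0 hu t ht)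
    have := ((((hasDerivAt_id t).const_mul (α - β)).ofReal_comp.mul_const I).add
      (((hu t ht).log hut).ofReal_comp.const_mul ((1 + β * I) / 2)))
    refine this.congr_deriv ?_
    field_simp
    push_cast
    ring
  set z₀ : ℂ := (X 0).1 + (X 0).2 * I
  have hG0 : (((α - β) * 0 : ℝ) : ℂ) * I + (1 + β * I) / 2 * Real.log (u 0) =
      (1 + β * I) * Real.log ‖z₀‖ := by
    rw [hlog_u0]
    push_cast
    ring
  rw [eq_mul_exp_of_hasDerivAt (fun t ht => hasDerivAt_fst_add_snd_mul_I (hX t ht)) hG t ht,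
    sub_eq_add_neg, Complex.exp_add, mul_comm (cexp _), ← mul_assoc, hG0,
    mul_exp_neg_log_norm_eq_exp_asymptoticPhase hz0, ← Complex.exp_add, ← Complex.exp_add]
  congr 1
  push_cast
  ring

end StuartLandau

/-- Defining property of the asymptotic phase of the Stuart–Landau oscillator:
any solution starting at a nonzero point `x₀` converges to the limit-cycle trajectory
`(cos(ωt + θ₀), sin(ωt + θ₀))` with `ω = α − β` and asymptotic phase
`θ₀ = arg(x₀) − β log‖x₀‖` (with `x₀` viewed as a nonzero complex number). -/
theorem sl_asymptotic_phase
    (α β ω : ℝ) (hω : ω = α - β)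
    (X : ℝ → ℝ × ℝ) (x₀ : ℝ × ℝ) (hx₀ : x₀ ≠ (0, 0)) (hX0 : X 0 = x₀)
    (hX : ∀ t, 0 ≤ t → HasDerivAt X (slField α β (X t)) t)
    (θ₀ : ℝ)
    (hθ₀ : θ₀ = Complex.arg (x₀.1 + x₀.2 * Complex.I)
              - β * Real.log ‖(x₀.1 + x₀.2 * Complex.I : ℂ)‖) :
    Filter.Tendsto
      (fun t => ‖X t - ((Real.cos (ω * t + θ₀), Real.sin (ω * t + θ₀)) : ℝ × ℝ)‖)
      Filter.atTop (nhds 0) := by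
  subst hω hX0
  have hθ : θ₀ = asymptoticPhase β ((X 0).1 + (X 0).2 * I) := hθ₀
  have hX0 : X 0 ≠ 0 := hx₀
  have hlim : Tendsto
      (fun t => ‖cexp ((1 + β * I) / 2 * Real.log ((X t).1 ^ 2 + (X t).2 ^ 2)) - 1‖)
      atTop (𝓝 0) := by
    have hlog := (StuartLandau.tendsto_fst_sq_add_snd_sq hX hX0).log one_ne_zero
    rw [Real.log_one] at hlog
    have hcont : Continuous fun x : ℝ => ‖cexp ((1 + β * I) / 2 * x) - 1‖ := by fun_prop
    simpa [Function.comp_def] using (hcont.tendsto 0).comp hlog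
  refine squeeze_zero' (Eventually.of_forall fun t => norm_nonneg _) ?_ hlim
  filter_upwards [eventually_ge_atTop 0] with t ht
  calc _ ≤ ‖((X t).1 + (X t).2 * I : ℂ) - cexp (((α - β) * t + θ₀ : ℝ) * I)‖ :=
        norm_sub_cos_sin_le _ _
    _ = _ := by
      rw [StuartLandau.fst_add_snd_mul_I_eq hX hX0 t ht, ← hθ, ← mul_sub_one, norm_mul,
        Complex.norm_exp_ofReal_mul_I, one_mul]
end
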